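/- Let 0 < R < P be real constants, let φ : [0,∞) → [0,∞) be an increasing, non-constant, convex function, and for each integer m ≥ 1 define F_m(t) = ∫_{tR}^{tP} (y − tR)^{m−1}/(P−R)^m · exp(−φ(y)) dy. Then for every positive integer m, limsup_{t→∞} ln F_m(t) / φ(R·t) ≥ −1. Moreover, for every α > 1 the set {t ∈ [0,∞) : ln F_m(t)/φ(R·t) ≤ −α} has finite Lebesgue measure. -/

import Mathlib

open MeasureTheory Filter Set

/-!
Take `c = exp (-δ φ(Rt))`. Restricting the integral to `[tR, tR + c]`, where `exp (-φ)` is at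
least `exp (-φ (tR + c))`, gives `log F_m(t) ≥ -m δ φ(Rt) - φ(Rt + c) - O(1)`. Hence
`log F_m(t) / φ(Rt) ≤ -α` with `α > 1` and `t` large forces a jump
`φ(s + exp (-δ φ s)) ≥ (1 + η) φ s` at `s = Rt`. Such jumps are rare: on each band
`(1 + η)^k ≤ φ s < (1 + η)^(k+1)` they occur only in an interval of length `exp (-δ (1 + η)^k)`,
and these lengths are summable. So the jump set has finite measure: this bounds the set where the
ratio is `≤ -α`, and, since the complement of the jump set is unbounded, it gives
`log F_m(t) / φ(Rt) ≥ -1 - ε` for arbitrarily large `t`.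
-/

open Real

theorem ConvexOn.tendsto_atTop_of_lt {φ : ℝ → ℝ} (hφ : ConvexOn ℝ (Ici 0) φ) {a b : ℝ}
    (ha : 0 ≤ a) (hab : a < b) (hφab : φ a < φ b) : Tendsto φ atTop atTop := by
  set σ := (φ b - φ a) / (b - a)
  have hσ : 0 < σ := div_pos (sub_pos.2 hφab) (sub_pos.2 hab)
  have hlin : ∀ x, b < x → φ b + σ * (x - b) ≤ φ x := by
    intro x hx
    have := hφ.slope_mono_adjacent ha (mem_Ici.2 (by linarith : 0 ≤ x)) hab hx
    rw [le_div_iff₀ (sub_pos.2 hx)] at this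
    linarith
  refine tendsto_atTop_mono' atTop ((eventually_gt_atTop b).mono hlin) ?_
  exact tendsto_atTop_add_const_left _ _
    ((tendsto_atTop_add_const_right _ _ tendsto_id).const_mul_atTop hσ)

theorem tendsto_atTop_of_monotoneOn_of_convexOn {φ : ℝ → ℝ} (hmono : MonotoneOn φ (Ici 0))
    (hconv : ConvexOn ℝ (Ici 0) φ) (hne : ∃ a ∈ Ici (0 : ℝ), ∃ b ∈ Ici (0 : ℝ), φ a ≠ φ b) :
    Tendsto φ atTop atTop := by
  obtain ⟨a, ha, b, hb, hab⟩ := hne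
  rcases (ne_of_apply_ne φ hab).lt_or_gt with h | h
  · exact hconv.tendsto_atTop_of_lt ha h ((hmono ha hb h.le).lt_of_ne hab)
  · exact hconv.tendsto_atTop_of_lt hb h ((hmono hb ha h.le).lt_of_ne hab.symm)

theorem frequently_atTop_notMem_of_volume_lt_top {s : Set ℝ} (hs : volume s < ⊤) :
    ∃ᶠ x in atTop, x ∉ s := by
  intro h
  obtain ⟨T, hT⟩ := h.exists_forall_of_atTop
  have := measure_mono (μ := volume) fun x (hx : x ∈ Ici T) => not_not.1 (hT x hx)
  rw [Real.volume_Ici, top_le_iff] at this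
  exact hs.ne this

theorem volume_lt_top_of_eventually_mem {A B : Set ℝ} {a : ℝ} (hA : A ⊆ Ici a)
    (hB : volume B < ⊤) (h : ∀ᶠ t in atTop, t ∈ A → t ∈ B) : volume A < ⊤ := by
  obtain ⟨T, hT⟩ := h.exists_forall_of_atTop
  have hsub : A ⊆ Icc a T ∪ B := fun t ht =>
    (le_total t T).elim (fun h => Or.inl ⟨hA ht, h⟩) (fun h => Or.inr (hT t h ht))
  refine (measure_mono hsub).trans_lt ((measure_union_le _ _).trans_lt ?_)
  exact ENNReal.add_lt_top.2 ⟨by simp, hB⟩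

theorem summable_exp_neg_mul_one_add_pow {δ η : ℝ} (hδ : 0 < δ) (hη : 0 < η) :
    Summable fun k : ℕ => exp (-(δ * (1 + η) ^ k)) := by
  refine Summable.of_nonneg_of_le (fun _ => (exp_pos _).le) (fun k => ?_)
    (summable_geometric_of_lt_one (exp_pos _).le (exp_lt_one_iff.2 (by nlinarith : -(δ * η) < 0)))
  rw [← exp_nat_mul, exp_le_exp]
  nlinarith [one_add_mul_le_pow (by linarith : (-2 : ℝ) ≤ η) k]

def jumpSet (φ : ℝ → ℝ) (δ η : ℝ) : Set ℝ :=
  {s | 0 ≤ s ∧ 1 ≤ φ s ∧ (1 + η) * φ s ≤ φ (s + exp (-(δ * φ s)))}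

section jumpSet

variable {φ : ℝ → ℝ} {δ η : ℝ}

theorem sub_lt_of_mem_jumpSet (hφ : MonotoneOn φ (Ici 0)) (hδ : 0 ≤ δ) (hη : 0 ≤ η) {k : ℕ}
    {x y : ℝ} (hx : x ∈ jumpSet φ δ η) (hxk : (1 + η) ^ k ≤ φ x) (hy : 0 ≤ y)
    (hyk : φ y < (1 + η) ^ (k + 1)) : y - x < exp (-(δ * (1 + η) ^ k)) := by
  obtain ⟨hx0, -, hjump⟩ := hx
  have hyx : y < x + exp (-(δ * φ x)) := by
    by_contra! h
    have hle := hφ (mem_Ici.2 (by positivity)) (mem_Ici.2 hy) h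
    have : (1 + η) ^ (k + 1) ≤ (1 + η) * φ x := by
      rw [pow_succ']
      gcongr
    linarith
  have : exp (-(δ * φ x)) ≤ exp (-(δ * (1 + η) ^ k)) :=
    exp_le_exp.2 (neg_le_neg (mul_le_mul_of_nonneg_left hxk hδ))
  linarith

theorem volume_jumpSet_lt_top (hφ : MonotoneOn φ (Ici 0)) (hδ : 0 < δ) (hη : 0 < η) :
    volume (jumpSet φ δ η) < ⊤ := by
  set A : ℕ → Set ℝ := fun k =>
    jumpSet φ δ η ∩ {s | (1 + η) ^ k ≤ φ s ∧ φ s < (1 + η) ^ (k + 1)}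
  have hcover : jumpSet φ δ η ⊆ ⋃ k, A k := fun s hs => by
    obtain ⟨k, hk⟩ := exists_nat_pow_near hs.2.1 (by linarith : (1 : ℝ) < 1 + η)
    exact mem_iUnion.2 ⟨k, hs, hk⟩
  have hA : ∀ k, volume (A k) ≤ ENNReal.ofReal (exp (-(δ * (1 + η) ^ k))) := by
    intro k
    refine (Real.volume_le_diam _).trans (Metric.ediam_le fun x hx y hy => ?_)
    rw [edist_dist, Real.dist_eq]
    refine ENNReal.ofReal_le_ofReal (abs_sub_le_iff.2 ⟨?_, ?_⟩) <;> apply le_of_lt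
    · exact sub_lt_of_mem_jumpSet hφ hδ.le hη.le hy.1 hy.2.1 hx.1.1 hx.2.2
    · exact sub_lt_of_mem_jumpSet hφ hδ.le hη.le hx.1 hx.2.1 hy.1.1 hy.2.2
  calc volume (jumpSet φ δ η) ≤ ∑' k, volume (A k) :=
        (measure_mono hcover).trans (measure_iUnion_le _)
    _ ≤ ∑' k, ENNReal.ofReal (exp (-(δ * (1 + η) ^ k))) := ENNReal.tsum_le_tsum hA
    _ = ENNReal.ofReal (∑' k, exp (-(δ * (1 + η) ^ k))) :=
      (ENNReal.ofReal_tsum_of_nonneg (fun _ => (exp_pos _).le)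
        (summable_exp_neg_mul_one_add_pow hδ hη)).symm
    _ < ⊤ := ENNReal.ofReal_lt_top

theorem volume_preimage_mul_jumpSet_lt_top (hφ : MonotoneOn φ (Ici 0)) {R : ℝ} (hR : R ≠ 0)
    (hδ : 0 < δ) (hη : 0 < η) : volume ((R * ·) ⁻¹' jumpSet φ δ η) < ⊤ := by
  rw [Real.volume_preimage_mul_left hR]
  exact ENNReal.mul_lt_top ENNReal.ofReal_lt_top (volume_jumpSet_lt_top hφ hδ hη)

end jumpSet

section integral

variable {φ : ℝ → ℝ} {m : ℕ} {a b c D : ℝ}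

theorem integral_sub_pow_mul_exp_neg_ge (hφ : MonotoneOn φ (Ici 0)) (hm : 1 ≤ m) (ha : 0 ≤ a)
    (hc : 0 < c) (hcb : a + c ≤ b) (hD : 0 < D) :
    c ^ m / (m * D ^ m) * exp (-φ (a + c)) ≤
      ∫ y in a..b, (y - a) ^ (m - 1) / D ^ m * exp (-φ y) := by
  have hab : a ≤ b := by linarith
  have hanti : AntitoneOn (fun y => exp (-φ y)) (uIcc a b) := by
    rw [uIcc_of_le hab]
    exact fun x hx y hy hxy =>
      exp_le_exp.2 (neg_le_neg (hφ (ha.trans hx.1) (ha.trans hy.1) hxy))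
  have hint : IntervalIntegrable (fun y => (y - a) ^ (m - 1) / D ^ m * exp (-φ y)) volume a b :=
    hanti.intervalIntegrable.continuousOn_mul (by fun_prop)
  calc c ^ m / (m * D ^ m) * exp (-φ (a + c))
      = ∫ y in a..a + c, (y - a) ^ (m - 1) / D ^ m * exp (-φ (a + c)) := by
        rw [intervalIntegral.integral_mul_const, intervalIntegral.integral_div,
          intervalIntegral.integral_comp_sub_right (fun y => y ^ (m - 1)), integral_pow]
        obtain ⟨k, rfl⟩ := Nat.exists_eq_add_of_le' hm
        field_simp
        simp [mul_comm]
    _ ≤ ∫ y in a..a + c, (y - a) ^ (m - 1) / D ^ m * exp (-φ y) := by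
        refine intervalIntegral.integral_mono_on (by linarith)
          ((continuous_sub_right a).pow _ |>.div_const _ |>.mul_const _ |>.intervalIntegrable _ _)
          (hint.mono_set ?_) fun y hy => ?_
        · rw [uIcc_of_le hab, uIcc_of_le (by linarith)]
          exact Icc_subset_Icc le_rfl hcb
        · have hy0 : 0 ≤ y - a := by linarith [hy.1]
          gcongr
          exact hφ (ha.trans hy.1) (by simp only [mem_Ici]; linarith) hy.2
    _ ≤ ∫ y in a..b, (y - a) ^ (m - 1) / D ^ m * exp (-φ y) := by
        refine intervalIntegral.integral_mono_interval le_rfl (by linarith) hcb ?_ hint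
        filter_upwards [ae_restrict_mem measurableSet_Ioc] with y hy
        have hy0 : 0 ≤ y - a := by linarith [hy.1]
        positivity

theorem log_integral_sub_pow_mul_exp_neg_ge (hφ : MonotoneOn φ (Ici 0)) (hm : 1 ≤ m)
    (ha : 0 ≤ a) (hc : 0 < c) (hcb : a + c ≤ b) (hD : 0 < D) :
    m * log c - φ (a + c) - log (m * D ^ m) ≤
      log (∫ y in a..b, (y - a) ^ (m - 1) / D ^ m * exp (-φ y)) := by
  have hm0 : (0 : ℝ) < m := by exact_mod_cast hm
  calc m * log c - φ (a + c) - log (m * D ^ m)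
      = log (c ^ m / (m * D ^ m) * exp (-φ (a + c))) := by
        rw [log_mul (x := c ^ m / _) (by positivity) (by positivity),
          log_div (by positivity) (by positivity), log_pow, log_exp]
        ring
    _ ≤ _ := log_le_log (by positivity) (integral_sub_pow_mul_exp_neg_ge hφ hm ha hc hcb hD)

end integral

section ratio

variable {φ G : ℝ → ℝ} {R m C : ℝ}

theorem neg_one_le_limsup_div (hφ : MonotoneOn φ (Ici 0)) (htop : Tendsto φ atTop atTop)
    (hR : 0 < R) (hm : 0 ≤ m)
    (hG : ∀ᶠ t in atTop, ∀ c, 0 < c → c ≤ 1 → m * log c - φ (R * t + c) - C ≤ G t) :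
    -1 ≤ limsup (fun t => G t / φ (R * t)) atTop := by
  by_cases hbdd : IsBoundedUnder (· ≤ ·) atTop fun t => G t / φ (R * t)
  swap
  · -- the real `limsup` of a function unbounded above is the junk value `0`, not `+∞`
    rw [Real.limsup_of_not_isBoundedUnder hbdd]
    norm_num
  refine le_of_forall_pos_le_add fun ε hε => ?_
  suffices -1 - ε ≤ limsup (fun t => G t / φ (R * t)) atTop by linarith
  refine le_limsup_of_frequently_le ?_ hbdd
  set δ := ε / (2 * (m + 1))
  have hδ : 0 < δ := by positivity
  have hφR : Tendsto (fun t => φ (R * t)) atTop atTop :=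
    htop.comp (tendsto_id.const_mul_atTop hR)
  refine ((frequently_atTop_notMem_of_volume_lt_top
    (volume_preimage_mul_jumpSet_lt_top hφ hR.ne' hδ hδ)).and_eventually
    ((hG.and (hφR.eventually_ge_atTop (max 1 (2 * |C| / ε)))).and
      (eventually_ge_atTop 0))).mono ?_
  rintro t ⟨hJ, ⟨hGt, hφt⟩, ht0⟩
  set x := φ (R * t)
  have hx1 : 1 ≤ x := le_of_max_le_left hφt
  have hjump : φ (R * t + exp (-(δ * x))) < (1 + δ) * x := by
    simp only [jumpSet, mem_preimage, mem_ofPred_eq, not_and, not_le] at hJ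
    exact hJ (by positivity) hx1
  have hlow := hGt (exp (-(δ * x))) (exp_pos _) (exp_le_one_iff.2 (by nlinarith))
  rw [log_exp] at hlow
  have hC : |C| ≤ ε / 2 * x := by
    have := le_of_max_le_right hφt
    rw [div_le_iff₀ hε] at this
    linarith
  have hδx : m * δ * x + δ * x = ε / 2 * x := by
    simp only [δ]
    field_simp
  rw [le_div_iff₀ (by linarith)]
  linarith [le_abs_self C]

theorem volume_setOf_div_le_neg_lt_top (hφ : MonotoneOn φ (Ici 0)) (htop : Tendsto φ atTop atTop)
    (hR : 0 < R) (hm : 0 ≤ m)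
    (hG : ∀ᶠ t in atTop, ∀ c, 0 < c → c ≤ 1 → m * log c - φ (R * t + c) - C ≤ G t)
    {α : ℝ} (hα : 1 < α) : volume {t | 0 ≤ t ∧ G t / φ (R * t) ≤ -α} < ⊤ := by
  set δ := (α - 1) / (2 * (m + 1))
  set η := (α - 1) / 4
  have hδ : 0 < δ := div_pos (by linarith) (by positivity)
  have hη : 0 < η := by positivity
  have hφR : Tendsto (fun t => φ (R * t)) atTop atTop :=
    htop.comp (tendsto_id.const_mul_atTop hR)
  refine volume_lt_top_of_eventually_mem (fun t ht => ht.1)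
    (volume_preimage_mul_jumpSet_lt_top hφ hR.ne' hδ hη) ?_
  filter_upwards [hG, hφR.eventually_ge_atTop (max 1 (4 * |C| / (α - 1)))]
    with t hGt hφt ⟨ht0, hbad⟩
  set x := φ (R * t)
  have hx1 : 1 ≤ x := le_of_max_le_left hφt
  refine ⟨by positivity, hx1, ?_⟩
  have hlow := hGt (exp (-(δ * x))) (exp_pos _) (exp_le_one_iff.2 (by nlinarith))
  rw [log_exp] at hlow
  rw [div_le_iff₀ (by linarith)] at hbad
  have hC : |C| ≤ η * x := by
    have := le_of_max_le_right hφt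
    rw [div_le_iff₀ (by linarith)] at this
    simp only [η]
    linarith
  have hδx : m * δ * x ≤ 2 * η * x := by
    have : m * δ ≤ 2 * η := by
      simp only [δ, η]
      rw [mul_div_assoc', div_le_iff₀ (by positivity)]
      nlinarith
    exact mul_le_mul_of_nonneg_right this (by linarith)
  have hαx : α * x = x + 4 * η * x := by
    simp only [η]
    ring
  show (1 + η) * x ≤ φ (R * t + exp (-(δ * x)))
  linarith [le_abs_self C]

end ratio

theorem stmt_5_general (R P : ℝ) (hR : 0 < R) (hRP : R < P)
    (φ : ℝ → ℝ)
    (hφmono : MonotoneOn φ (Ici 0))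
    (hφconv : ConvexOn ℝ (Ici 0) φ)
    (hφnonconst : ∃ a ∈ Ici (0:ℝ), ∃ b ∈ Ici (0:ℝ), φ a ≠ φ b)
    (F : ℕ → ℝ → ℝ)
    (hF : ∀ m : ℕ, 1 ≤ m → ∀ t : ℝ, 0 < t →
      F m t = ∫ y in (t * R)..(t * P),
        (y - t * R) ^ (m - 1) / (P - R) ^ m * Real.exp (-φ y)) :
    ∀ m : ℕ, 1 ≤ m →
      (-1 ≤ limsup (fun t : ℝ => Real.log (F m t) / φ (R * t)) atTop ∧
       ∀ α : ℝ, 1 < α →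
         volume {t : ℝ | 0 ≤ t ∧ Real.log (F m t) / φ (R * t) ≤ -α} < ⊤) := by
  intro m hm
  have htop := tendsto_atTop_of_monotoneOn_of_convexOn hφmono hφconv hφnonconst
  have hPR : 0 < P - R := sub_pos.2 hRP
  have hlog : ∀ᶠ t in atTop, ∀ c, 0 < c → c ≤ 1 →
      m * log c - φ (R * t + c) - log (m * (P - R) ^ m) ≤ log (F m t) := by
    filter_upwards [eventually_gt_atTop 0, eventually_ge_atTop (1 / (P - R))]
      with t ht0 ht1 c hc0 hc1
    have hcb : t * R + c ≤ t * P := by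
      rw [div_le_iff₀ hPR] at ht1
      linarith
    rw [hF m hm t ht0, mul_comm R t]
    exact log_integral_sub_pow_mul_exp_neg_ge hφmono hm (by positivity) hc0 hcb hPR
  exact ⟨neg_one_le_limsup_div hφmono htop hR m.cast_nonneg hlog,
    fun α hα => volume_setOf_div_le_neg_lt_top hφmono htop hR m.cast_nonneg hlog hα⟩

theorem stmt_5 (R P : ℝ) (hR : 0 < R) (hRP : R < P)
    (φ : ℝ → ℝ)
    (hφmono : MonotoneOn φ (Ici 0))
    (hφconv : ConvexOn ℝ (Ici 0) φ)
    (hφnonneg : ∀ x ∈ Ici (0:ℝ), 0 ≤ φ x)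
    (hφnonconst : ∃ a ∈ Ici (0:ℝ), ∃ b ∈ Ici (0:ℝ), φ a ≠ φ b)
    (F : ℕ → ℝ → ℝ)
    (hF : ∀ m : ℕ, 1 ≤ m → ∀ t : ℝ, 0 < t →
      F m t = ∫ y in (t * R)..(t * P),
        (y - t * R) ^ (m - 1) / (P - R) ^ m * Real.exp (-φ y)) :
    ∀ m : ℕ, 1 ≤ m →
      (-1 ≤ limsup (fun t : ℝ => Real.log (F m t) / φ (R * t)) atTop ∧
       ∀ α : ℝ, 1 < α →
         volume {t : ℝ | 0 ≤ t ∧ Real.log (F m t) / φ (R * t) ≤ -α} < ⊤) :=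
  stmt_5_general R P hR hRP φ hφmono hφconv hφnonconst F hF
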